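/- ħ-periodicity of the infinite-horizon value function. Let (Q_j)_{j∈ℕ⁺} ∈ M_{ħ,≫}(H) and (R_j)_{j∈ℕ⁺} ∈ M_{ħ,≫}(U), and assume U_ad(x_0) ≠ ∅ for every x_0 ∈ H. Then V(x_0;ℓ+ħ) = V(x_0;ℓ) for every ℓ ∈ ℕ and x_0 ∈ H; consequently the operators P_ℓ ∈ SL_+(H) representing V(·;ℓ) satisfy P_{ℓ+ħ} = P_ℓ for all ℓ ∈ ℕ. -/
import Mathlib


open scoped RealInnerProductSpace
noncomputable section

namespace ImpulseControl

/-- adjoint of a continuous linear map between real Hilbert spaces -/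
def adj {E F : Type*} [NormedAddCommGroup E] [InnerProductSpace ℝ E] [CompleteSpace E]
    [NormedAddCommGroup F] [InnerProductSpace ℝ F] [CompleteSpace F]
    (f : E →L[ℝ] F) : F →L[ℝ] E :=
  ContinuousLinearMap.adjoint f

/-- `ν(j) = j - [j/ħ]·ħ ∈ {1,…,ħ}` (where `[s] = max {k ∈ ℕ : k < s}`):
equals `ħ` when `ħ ∣ j`, else `j % ħ`. -/
def nu (hbar j : ℕ) : ℕ := if j % hbar = 0 then hbar else j % hbar

variable {H U : Type*} [NormedAddCommGroup H] [InnerProductSpace ℝ H] [CompleteSpace H]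
  [NormedAddCommGroup U] [InnerProductSpace ℝ U] [CompleteSpace U]

/-- a bounded self-adjoint nonnegative operator: membership in `SL₊` -/
def IsNonnegOp {E : Type*} [NormedAddCommGroup E] [InnerProductSpace ℝ E] [CompleteSpace E]
    (P : E →L[ℝ] E) : Prop :=
  IsSelfAdjoint P ∧ ∀ x : E, 0 ≤ ⟪P x, x⟫

/-- membership in `SL_≫`: self-adjoint, nonnegative and coercive -/
def IsCoerciveOp {E : Type*} [NormedAddCommGroup E] [InnerProductSpace ℝ E] [CompleteSpace E]
    (P : E →L[ℝ] E) : Prop :=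
  IsNonnegOp P ∧ ∃ δ : ℝ, 0 < δ ∧ ∀ x : E, δ * ‖x‖ ^ 2 ≤ ⟪P x, x⟫

/-- `M_{ħ,+}`: an `ħ`-periodic sequence of self-adjoint nonnegative operators (indices `j ≥ 1`). -/
def MemMPlus {E : Type*} [NormedAddCommGroup E] [InnerProductSpace ℝ E] [CompleteSpace E]
    (hbar : ℕ) (Q : ℕ → E →L[ℝ] E) : Prop :=
  (∀ j : ℕ, 1 ≤ j → IsNonnegOp (Q j)) ∧ ∀ j : ℕ, 1 ≤ j → Q (j + hbar) = Q j

/-- `M_{ħ,≫}`: an `ħ`-periodic sequence of self-adjoint coercive operators (indices `j ≥ 1`). -/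
def MemMCoercive {E : Type*} [NormedAddCommGroup E] [InnerProductSpace ℝ E] [CompleteSpace E]
    (hbar : ℕ) (Q : ℕ → E →L[ℝ] E) : Prop :=
  (∀ j : ℕ, 1 ≤ j → IsCoerciveOp (Q j)) ∧ ∀ j : ℕ, 1 ≤ j → Q (j + hbar) = Q j

section Defs

variable (T : ℝ → H →L[ℝ] H) (t : ℕ → ℝ) (hbar : ℕ) (B : ℕ → U →L[ℝ] H)

/-- post-impulse states: `xplusFrom T t ħ B ℓ x0 u m = x(t_{ℓ+m}^+ ; x0, u, ℓ)`. -/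
def xplusFrom (ℓ : ℕ) (x0 : H) (u : ℕ → U) : ℕ → H
  | 0 => x0
  | m + 1 => T (t (ℓ + m + 1) - t (ℓ + m)) (xplusFrom ℓ x0 u m)
      + B (nu hbar (ℓ + m + 1)) (u (ℓ + m + 1))

/-- pre-impulse states: `xtrajFrom T t ħ B ℓ x0 u m = x(t_{ℓ+m} ; x0, u, ℓ)` for `m ≥ 1`. -/
def xtrajFrom (ℓ : ℕ) (x0 : H) (u : ℕ → U) : ℕ → H
  | 0 => x0
  | m + 1 => T (t (ℓ + m + 1) - t (ℓ + m)) (xplusFrom T t hbar B ℓ x0 u m)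

/-- `x(t_j^+ ; x0, u)` -/
def xplus (x0 : H) (u : ℕ → U) : ℕ → H := xplusFrom T t hbar B 0 x0 u

/-- `x(t_j ; x0, u)` for `j ≥ 1` -/
def xtraj (x0 : H) (u : ℕ → U) : ℕ → H := xtrajFrom T t hbar B 0 x0 u

/-- the shifted admissible control set `U_ad(x0; ℓ)`; `U_ad(x0) = UadFrom T t ħ B 0 x0` -/
def UadFrom (ℓ : ℕ) (x0 : H) : Set (ℕ → U) :=
  {u | Summable (fun j : ℕ => ‖u (ℓ + j + 1)‖ ^ 2) ∧
       Summable (fun j : ℕ => ‖xtrajFrom T t hbar B ℓ x0 u (j + 1)‖ ^ 2)}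

/-- exponential `ħ`-stabilizability of `[A, B_ħ, Λ_ħ]` by an `ħ`-periodic feedback law:
every closed-loop trajectory decays like `C e^{-μ t}`. -/
def ExpStabilizable : Prop :=
  ∃ F : ℕ → H →L[ℝ] U, ∃ C μ : ℝ, 0 < C ∧ 0 < μ ∧
    ∀ (x0 : H) (u : ℕ → U),
      (∀ j : ℕ, 1 ≤ j → u j = F (nu hbar j) (xtraj T t hbar B x0 u j)) →
      ∀ (j : ℕ) (s : ℝ), t j < s → s ≤ t (j + 1) →
        ‖T (s - t j) (xplus T t hbar B x0 u j)‖ ≤ C * Real.exp (-μ * s) * ‖x0‖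

/-- the infinite-horizon cost `J(u; x0, ℓ)` -/
def Jinf (Q : ℕ → H →L[ℝ] H) (R : ℕ → U →L[ℝ] U) (ℓ : ℕ) (x0 : H) (u : ℕ → U) : ℝ :=
  ∑' m : ℕ,
    (⟪Q (ℓ + m + 1) (xtrajFrom T t hbar B ℓ x0 u (m + 1)), xtrajFrom T t hbar B ℓ x0 u (m + 1)⟫
      + ⟪R (ℓ + m + 1) (u (ℓ + m + 1)), u (ℓ + m + 1)⟫)

/-- the infinite-horizon value function `V(x0; ℓ)` -/
def Vinf (Q : ℕ → H →L[ℝ] H) (R : ℕ → U →L[ℝ] U) (ℓ : ℕ) (x0 : H) : ℝ :=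
  sInf {c : ℝ | ∃ u ∈ UadFrom T t hbar B ℓ x0, c = Jinf T t hbar B Q R ℓ x0 u}

/-- the finite-horizon cost `J(u; x0, ℓ, k̂)` with terminal weight `M` -/
def Jfin (Q : ℕ → H →L[ℝ] H) (R : ℕ → U →L[ℝ] U) (M : H →L[ℝ] H)
    (ℓ khat : ℕ) (x0 : H) (u : ℕ → U) : ℝ :=
  (∑ m ∈ Finset.Icc 1 (khat - ℓ),
    (⟪Q (ℓ + m) (xtrajFrom T t hbar B ℓ x0 u m), xtrajFrom T t hbar B ℓ x0 u m⟫
      + ⟪R (ℓ + m) (u (ℓ + m)), u (ℓ + m)⟫))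
  + ⟪M (xplusFrom T t hbar B ℓ x0 u (khat - ℓ)), xplusFrom T t hbar B ℓ x0 u (khat - ℓ)⟫

/-- the finite-horizon value function `V(x0; ℓ, k̂)` with terminal weight `M` -/
def Vfin (Q : ℕ → H →L[ℝ] H) (R : ℕ → U →L[ℝ] U) (M : H →L[ℝ] H)
    (ℓ khat : ℕ) (x0 : H) : ℝ :=
  sInf {c : ℝ | ∃ u : ℕ → U, Summable (fun j : ℕ => ‖u (ℓ + j + 1)‖ ^ 2) ∧
    c = Jfin T t hbar B Q R M ℓ khat x0 u}

/-- the `k`-th equation of the periodic Riccati-type system, where `G` is the (two-sided)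
inverse of `R_k + B_k* P_k B_k`. -/
def RicEq (Q : ℕ → H →L[ℝ] H) (R : ℕ → U →L[ℝ] U) (P : ℕ → H →L[ℝ] H)
    (G : U →L[ℝ] U) (k : ℕ) : Prop :=
  G ∘L (R k + adj (B k) ∘L P k ∘L B k) = 1 ∧
  (R k + adj (B k) ∘L P k ∘L B k) ∘L G = 1 ∧
  P (k - 1) - adj (T (t k - t (k - 1))) ∘L P k ∘L T (t k - t (k - 1)) =
    adj (T (t k - t (k - 1))) ∘L Q k ∘L T (t k - t (k - 1))
      - adj (T (t k - t (k - 1))) ∘L P k ∘L B k ∘L G ∘L adj (B k) ∘L P k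
          ∘L T (t k - t (k - 1))

/-- `P_0, …, P_ħ` is a solution of the periodic Riccati-type equation. -/
def IsRicSol (Q : ℕ → H →L[ℝ] H) (R : ℕ → U →L[ℝ] U) (P : ℕ → H →L[ℝ] H) : Prop :=
  (∀ k : ℕ, k ≤ hbar → IsNonnegOp (P k)) ∧ P 0 = P hbar ∧
  ∀ k : ℕ, 1 ≤ k → k ≤ hbar → ∃ G : U →L[ℝ] U, RicEq T t B Q R P G k

end Defs

section Helpers

variable {H U : Type*} [NormedAddCommGroup H] [InnerProductSpace ℝ H] [CompleteSpace H]
  [NormedAddCommGroup U] [InnerProductSpace ℝ U] [CompleteSpace U]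

lemma xplusFrom_shift (T : ℝ → H →L[ℝ] H) (t : ℕ → ℝ) (hbar : ℕ) (B : ℕ → U →L[ℝ] H)
    (htper : ∀ j : ℕ, t (j + hbar) = t j + t hbar)
    (ℓ : ℕ) (x0 : H) (u : ℕ → U) :
    ∀ m, xplusFrom T t hbar B (ℓ + hbar) x0 u m
      = xplusFrom T t hbar B ℓ x0 (fun j => u (j + hbar)) m := by
  intro m
  induction m with
  | zero => rfl
  | succ m ih =>
    have h1 : t (ℓ + hbar + m + 1) - t (ℓ + hbar + m) = t (ℓ + m + 1) - t (ℓ + m) := by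
      have e1 : ℓ + hbar + m + 1 = (ℓ + m + 1) + hbar := by omega
      have e2 : ℓ + hbar + m = (ℓ + m) + hbar := by omega
      rw [e1, e2, htper, htper]; ring
    have h2 : nu hbar (ℓ + hbar + m + 1) = nu hbar (ℓ + m + 1) := by
      have e1 : ℓ + hbar + m + 1 = (ℓ + m + 1) + hbar := by omega
      simp [nu, e1, Nat.add_mod_right]
    have h3 : ℓ + hbar + m + 1 = ℓ + m + 1 + hbar := by omega
    simp only [xplusFrom]
    rw [ih, h1, h2, h3]

lemma xtrajFrom_shift (T : ℝ → H →L[ℝ] H) (t : ℕ → ℝ) (hbar : ℕ) (B : ℕ → U →L[ℝ] H)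
    (htper : ∀ j : ℕ, t (j + hbar) = t j + t hbar)
    (ℓ : ℕ) (x0 : H) (u : ℕ → U) :
    ∀ m, xtrajFrom T t hbar B (ℓ + hbar) x0 u m
      = xtrajFrom T t hbar B ℓ x0 (fun j => u (j + hbar)) m := by
  intro m
  cases m with
  | zero => rfl
  | succ m =>
    have h1 : t (ℓ + hbar + m + 1) - t (ℓ + hbar + m) = t (ℓ + m + 1) - t (ℓ + m) := by
      have e1 : ℓ + hbar + m + 1 = (ℓ + m + 1) + hbar := by omega
      have e2 : ℓ + hbar + m = (ℓ + m) + hbar := by omega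
      rw [e1, e2, htper, htper]; ring
    simp only [xtrajFrom]
    rw [xplusFrom_shift T t hbar B htper, h1]

lemma Uad_shift (T : ℝ → H →L[ℝ] H) (t : ℕ → ℝ) (hbar : ℕ) (B : ℕ → U →L[ℝ] H)
    (htper : ∀ j : ℕ, t (j + hbar) = t j + t hbar)
    (ℓ : ℕ) (x0 : H) (u : ℕ → U) :
    u ∈ UadFrom T t hbar B (ℓ + hbar) x0 ↔
      (fun j => u (j + hbar)) ∈ UadFrom T t hbar B ℓ x0 := by
  have e1 : (fun j : ℕ => ‖u (ℓ + hbar + j + 1)‖ ^ 2)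
      = fun j : ℕ => ‖u (ℓ + j + 1 + hbar)‖ ^ 2 := by
    funext j; congr 3; omega
  constructor
  · rintro ⟨hu, hx⟩
    refine ⟨by rw [← e1]; exact hu, ?_⟩
    refine hx.congr fun j => ?_
    rw [xtrajFrom_shift T t hbar B htper]
  · rintro ⟨hu, hx⟩
    refine ⟨by rw [e1]; exact hu, ?_⟩
    refine hx.congr fun j => ?_
    rw [xtrajFrom_shift T t hbar B htper]

lemma Jinf_shift (T : ℝ → H →L[ℝ] H) (t : ℕ → ℝ) (hbar : ℕ) (B : ℕ → U →L[ℝ] H)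
    (htper : ∀ j : ℕ, t (j + hbar) = t j + t hbar)
    (Q : ℕ → H →L[ℝ] H) (R : ℕ → U →L[ℝ] U)
    (hQper : ∀ j : ℕ, 1 ≤ j → Q (j + hbar) = Q j)
    (hRper : ∀ j : ℕ, 1 ≤ j → R (j + hbar) = R j)
    (ℓ : ℕ) (x0 : H) (u : ℕ → U) :
    Jinf T t hbar B Q R (ℓ + hbar) x0 u
      = Jinf T t hbar B Q R ℓ x0 (fun j => u (j + hbar)) := by
  unfold Jinf
  refine tsum_congr fun m => ?_
  have e1 : ℓ + hbar + m + 1 = (ℓ + m + 1) + hbar := by omega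
  rw [xtrajFrom_shift T t hbar B htper, e1, hQper _ (by omega), hRper _ (by omega)]

lemma isSelfAdjoint_symm {E : Type*} [NormedAddCommGroup E] [InnerProductSpace ℝ E]
    [CompleteSpace E] {A : E →L[ℝ] E} (hA : IsSelfAdjoint A) (x y : E) :
    ⟪A x, y⟫ = ⟪x, A y⟫ :=
  (ContinuousLinearMap.isSelfAdjoint_iff_isSymmetric.mp hA) x y

end Helpers


/-- Lemma 2.5(ii): `ħ`-periodicity of the infinite-horizon value function, and hence of the
representing operators. -/
theorem value_function_periodic
    {H U : Type*} [NormedAddCommGroup H] [InnerProductSpace ℝ H]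
    [CompleteSpace H] [NormedAddCommGroup U] [InnerProductSpace ℝ U] [CompleteSpace U]
    (T : ℝ → H →L[ℝ] H) (hT0 : T 0 = 1)
    (hTadd : ∀ a b : ℝ, 0 ≤ a → 0 ≤ b → T (a + b) = T a ∘L T b)
    (hTcont : ∀ x : H, ContinuousOn (fun τ : ℝ => T τ x) (Set.Ici (0 : ℝ)))
    (hbar : ℕ) (hhbar : 0 < hbar)
    (t : ℕ → ℝ) (ht0 : t 0 = 0) (htmono : StrictMono t)
    (htper : ∀ j : ℕ, t (j + hbar) = t j + t hbar)
    (B : ℕ → U →L[ℝ] H)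
    (Q : ℕ → H →L[ℝ] H) (R : ℕ → U →L[ℝ] U)
    (hQ : MemMCoercive hbar Q) (hR : MemMCoercive hbar R)
    (hAd : ∀ x0 : H, (UadFrom T t hbar B 0 x0).Nonempty) :
    (∀ (ℓ : ℕ) (x0 : H),
      Vinf T t hbar B Q R (ℓ + hbar) x0 = Vinf T t hbar B Q R ℓ x0) ∧
    (∀ (ℓ : ℕ) (P P' : H →L[ℝ] H), IsNonnegOp P → IsNonnegOp P' →
      (∀ x0 : H, Vinf T t hbar B Q R ℓ x0 = ⟪P x0, x0⟫) →
      (∀ x0 : H, Vinf T t hbar B Q R (ℓ + hbar) x0 = ⟪P' x0, x0⟫) →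
      P' = P) := by
  have hVper : ∀ (ℓ : ℕ) (x0 : H),
      Vinf T t hbar B Q R (ℓ + hbar) x0 = Vinf T t hbar B Q R ℓ x0 := by
    intro ℓ x0
    unfold Vinf
    congr 1
    ext c
    constructor
    · rintro ⟨u, hu, rfl⟩
      exact ⟨fun j => u (j + hbar), (Uad_shift T t hbar B htper ℓ x0 u).mp hu,
        (Jinf_shift T t hbar B htper Q R hQ.2 hR.2 ℓ x0 u)⟩
    · rintro ⟨u, hu, rfl⟩
      refine ⟨fun j => u (j - hbar), ?_, ?_⟩
      · have hw : (fun j => (fun j => u (j - hbar)) (j + hbar)) = u := by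
          funext j; simp
        rw [Uad_shift T t hbar B htper ℓ x0, hw]; exact hu
      · have hw : (fun j => (fun j => u (j - hbar)) (j + hbar)) = u := by
          funext j; simp
        rw [Jinf_shift T t hbar B htper Q R hQ.2 hR.2, hw]
  refine ⟨hVper, ?_⟩
  intro ℓ P P' hP hP' hrep hrep'
  have hq : ∀ x : H, ⟪P' x, x⟫ = ⟪P x, x⟫ := by
    intro x
    rw [← hrep', ← hrep, hVper]
  have key : ∀ x y : H, ⟪P' x, y⟫ = ⟪P x, y⟫ := by
    intro x y
    have h1 := hq (x + y)
    have hx := hq x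
    have hy := hq y
    simp only [map_add, inner_add_left, inner_add_right] at h1
    have s1 : ⟪P' y, x⟫ = ⟪P' x, y⟫ := by
      rw [isSelfAdjoint_symm hP'.1, real_inner_comm]
    have s2 : ⟪P y, x⟫ = ⟪P x, y⟫ := by
      rw [isSelfAdjoint_symm hP.1, real_inner_comm]
    linarith
  ext x
  have hz : ∀ y : H, ⟪P' x - P x, y⟫ = 0 := by
    intro y
    rw [inner_sub_left]
    linarith [key x y]
  have := hz (P' x - P x)
  rw [inner_self_eq_zero] at this
  exact sub_eq_zero.mp this


end ImpulseControl
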